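/- arXiv:0904.1319 — 2 statements merged into one kernel-verified Lean document; each statement's English description precedes it below -/
import Mathlib

section
/- For any finite free graph G with n vertices, φ(G) ≥ n/ᾱ(G) ≥ n/(n − d(G)), where ᾱ(G) is the maximum size of a free independent set of G and d(G) = min over edges uv of |N(u) ∪ N(v)|. -/
open SimpleGraph

variable {V : Type*} {W : Type*}

/-- An independent set in a simple graph. -/
def IsIndep (G : SimpleGraph V) (s : Set V) : Prop :=
  ∀ ⦃u⦄, u ∈ s → ∀ ⦃v⦄, v ∈ s → ¬ G.Adj u v

/-- A maximal independent set. -/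
def IsMaxIndep (G : SimpleGraph V) (s : Set V) : Prop :=
  IsIndep G s ∧ ∀ t : Set V, IsIndep G t → s ⊆ t → s = t

/-- A free independent set: an independent set contained in at least two
distinct maximal independent sets. -/
def IsFreeIndep (G : SimpleGraph V) (s : Set V) : Prop :=
  IsIndep G s ∧ ∃ M₁ M₂ : Set V, IsMaxIndep G M₁ ∧ IsMaxIndep G M₂ ∧ M₁ ≠ M₂ ∧ s ⊆ M₁ ∧ s ⊆ M₂

/-- A free graph: every vertex lies in some free independent set. -/
def IsFreeGraph (G : SimpleGraph V) : Prop :=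
  ∀ v : V, ∃ F : Set V, IsFreeIndep G F ∧ v ∈ F

/-- A partition of the vertices into `t` free independent sets. -/
def FreePartition (G : SimpleGraph V) (t : ℕ) : Prop :=
  ∃ P : Fin t → Set V, (∀ i, IsFreeIndep G (P i)) ∧ ∀ v : V, ∃! i, v ∈ P i

/-- The free chromatic number `φ(G)` (`∞` if no free partition exists). -/
noncomputable def freeChrom (G : SimpleGraph V) : ℕ∞ :=
  sInf {t : ℕ∞ | ∃ n : ℕ, t = n ∧ FreePartition G n}

/-- The chromatic number as a natural number. -/
noncomputable def chromNum (G : SimpleGraph V) : ℕ :=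
  sInf {k : ℕ | G.Colorable k}

/-- The circular complete graph `K_{n/d}`. -/
def circKG (n d : ℕ) : SimpleGraph (Fin n) where
  Adj i j := i ≠ j ∧ d ≤ ((i : ℤ) - (j : ℤ)).natAbs ∧ ((i : ℤ) - (j : ℤ)).natAbs ≤ n - d
  symm := by
    refine ⟨?_⟩
    intro i j h
    obtain ⟨h1, h2, h3⟩ := h
    refine ⟨h1.symm, ?_, ?_⟩ <;> omega
  loopless := by refine ⟨?_⟩; intro i h; exact h.1 rfl

/-- The circular chromatic number, as a real number. -/
noncomputable def circChrom (G : SimpleGraph V) : ℝ :=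
  sInf {x : ℝ | ∃ n d : ℕ, 0 < d ∧ Nat.gcd n d = 1 ∧ x = (n : ℝ) / d ∧
    Nonempty (G →g circKG n d)}

/-- The Mycielskian of a graph. -/
def mycielskian (G : SimpleGraph V) : SimpleGraph (Option (V ⊕ V)) where
  Adj x y := match x, y with
    | some (Sum.inl u), some (Sum.inl v) => G.Adj u v
    | some (Sum.inl u), some (Sum.inr v) => G.Adj u v
    | some (Sum.inr u), some (Sum.inl v) => G.Adj u v
    | some (Sum.inr _), none => True
    | none, some (Sum.inr _) => True
    | _, _ => False
  symm := by
    refine ⟨?_⟩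
    rintro (_ | (u | u)) (_ | (v | v)) h <;> simp_all <;> exact G.adj_symm h
  loopless := by
    refine ⟨?_⟩
    rintro (_ | (u | u)) h <;> simp_all

/-- Vertex type of the iterated Mycielskian. -/
def MycV (V : Type u) : ℕ → Type u
  | 0 => V
  | t + 1 => Option (MycV V t ⊕ MycV V t)

/-- The `t`-fold iterated Mycielskian. -/
def mycIter (G : SimpleGraph V) : ∀ t : ℕ, SimpleGraph (MycV V t)
  | 0 => G
  | t + 1 => mycielskian (mycIter G t)

/-- The maximum size of a free independent set. -/
noncomputable def freeAlpha (G : SimpleGraph V) : ℕ :=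
  sSup {k : ℕ | ∃ F : Set V, IsFreeIndep G F ∧ k = F.ncard}

/-- The independence number. -/
noncomputable def alphaNum (G : SimpleGraph V) : ℕ :=
  sSup {k : ℕ | ∃ S : Set V, IsIndep G S ∧ k = S.ncard}

/-- `d(G)`: the minimum over edges `uv` of `|N(u) ∪ N(v)|`. -/
noncomputable def dMin (G : SimpleGraph V) : ℕ :=
  sInf {k : ℕ | ∃ u v : V, G.Adj u v ∧ k = (G.neighborSet u ∪ G.neighborSet v).ncard}

/-- An `(a,b)`-free coloring of `G` with `t` colors. -/
def ABFree (G : SimpleGraph V) (a b t : ℕ) : Prop :=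
  ∃ (P : Fin t → Set V) (e : Fin (t - a) → V × V),
    (∀ v : V, ∃! i, v ∈ P i) ∧
    (∀ i, IsIndep G (P i)) ∧
    (∀ i : Fin (t - a), IsFreeIndep G (P (Fin.castLE (Nat.sub_le t a) i))) ∧
    (∀ i : Fin (t - a), G.Adj (e i).1 (e i).2 ∧
      (G.neighborSet (e i).1 ∪ G.neighborSet (e i).2) ∩ P (Fin.castLE (Nat.sub_le t a) i) = ∅) ∧
    (∀ v : V, Set.ncard {i : Fin (t - a) | v = (e i).1 ∨ v = (e i).2} ≤ b)

/-- The `(a,b)`-free chromatic number `φ^a_b(G)`. -/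
noncomputable def abFreeChrom (G : SimpleGraph V) (a b : ℕ) : ℕ∞ :=
  sInf {t : ℕ∞ | ∃ n : ℕ, t = n ∧ ABFree G a b n}

/-- The Kneser graph `KG(m,n)`. -/
def kneser (m n : ℕ) : SimpleGraph {A : Finset (Fin m) // A.card = n} where
  Adj A B := A ≠ B ∧ Disjoint A.1 B.1
  symm := ⟨fun A B h => ⟨h.1.symm, h.2.symm⟩⟩
  loopless := ⟨fun A h => h.1 rfl⟩

/-- The generalized Kneser graph `KG(m,n,s)`. -/
def genKneser (m n s : ℕ) : SimpleGraph {A : Finset (Fin m) // A.card = n} where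
  Adj A B := A ≠ B ∧ (A.1 ∩ B.1).card ≤ s
  symm := ⟨fun A B h => ⟨h.1.symm, by rw [Finset.inter_comm]; exact h.2⟩⟩
  loopless := ⟨fun A h => h.1 rfl⟩

/-- 2-stability of a subset of `[m]`. -/
def TwoStable (m : ℕ) (A : Finset (Fin m)) : Prop :=
  ∀ x ∈ A, ∀ y ∈ A, x ≠ y →
    2 ≤ ((x : ℤ) - (y : ℤ)).natAbs ∧ ((x : ℤ) - (y : ℤ)).natAbs ≤ m - 2

/-- The Schrijver graph `SG(m,n)`. -/
def schrijver (m n : ℕ) :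
    SimpleGraph {A : Finset (Fin m) // A.card = n ∧ TwoStable m A} where
  Adj A B := A ≠ B ∧ Disjoint A.1 B.1
  symm := ⟨fun A B h => ⟨h.1.symm, h.2.symm⟩⟩
  loopless := ⟨fun A h => h.1 rfl⟩

/-
Two distinct maximal independent sets `M₁ ⊇ F ⊆ M₂` yield an edge `xy` with `x ∈ M₁ \ M₂` and
`y ∈ M₂` (maximality of `M₂`). Every vertex of `F` is non-adjacent to both `x` and `y`, so
`F` avoids `N(x) ∪ N(y)`, a set of size at least `d(G)`; hence `|F| ≤ n - d(G)`. Covering the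
`n` vertices by `φ(G)` free sets of size at most `ᾱ(G)` gives `n ≤ φ(G) ᾱ(G)`.
-/

namespace IsMaxIndep

variable {G : SimpleGraph V} {M M' : Set V}

lemma exists_adj_of_notMem (hM : IsMaxIndep G M) {x : V} (hx : x ∉ M) :
    ∃ y ∈ M, G.Adj x y := by
  by_contra! h
  have hins : IsIndep G (insert x M) := by
    rintro u (rfl | hu) v (rfl | hv)
    · exact G.irrefl
    · exact h v hv
    · exact fun huv => h u hu huv.symm
    · exact hM.1 hu hv
  exact hx (hM.2 _ hins (Set.subset_insert x M) ▸ Set.mem_insert x M)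

lemma exists_mem_notMem_of_ne (hM : IsMaxIndep G M) (hM' : IsMaxIndep G M') (hne : M ≠ M') :
    ∃ x ∈ M, x ∉ M' := by
  by_contra! h
  exact hne (hM.2 M' hM'.1 h)

end IsMaxIndep

lemma IsIndep.disjoint_neighborSet {G : SimpleGraph V} {s : Set V} (hs : IsIndep G s) {x : V}
    (hx : x ∈ s) : Disjoint s (G.neighborSet x) :=
  Set.disjoint_left.2 fun _ hz hxz => hs hx hz hxz

lemma IsFreeIndep.exists_adj_disjoint_neighborSet_union {G : SimpleGraph V} {F : Set V}
    (hF : IsFreeIndep G F) :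
    ∃ x y, G.Adj x y ∧ Disjoint F (G.neighborSet x ∪ G.neighborSet y) := by
  obtain ⟨-, M₁, M₂, hM₁, hM₂, hne, hF₁, hF₂⟩ := hF
  obtain ⟨x, hx₁, hx₂⟩ := hM₁.exists_mem_notMem_of_ne hM₂ hne
  obtain ⟨y, hy₂, hxy⟩ := hM₂.exists_adj_of_notMem hx₂
  exact ⟨x, y, hxy, Set.disjoint_union_right.2
    ⟨(hM₁.1.disjoint_neighborSet hx₁).mono_left hF₁,
      (hM₂.1.disjoint_neighborSet hy₂).mono_left hF₂⟩⟩

section Finite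

variable [Finite V] {G : SimpleGraph V} {F : Set V}

lemma IsFreeIndep.ncard_add_dMin_le (hF : IsFreeIndep G F) : F.ncard + dMin G ≤ Nat.card V := by
  obtain ⟨x, y, hxy, hdisj⟩ := hF.exists_adj_disjoint_neighborSet_union
  calc F.ncard + dMin G ≤ F.ncard + (G.neighborSet x ∪ G.neighborSet y).ncard :=
        by gcongr; exact Nat.sInf_le ⟨x, y, hxy, rfl⟩
    _ = (F ∪ (G.neighborSet x ∪ G.neighborSet y)).ncard := (Set.ncard_union_eq hdisj).symm
    _ ≤ Nat.card V := Set.ncard_le_card _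

lemma ncard_le_freeAlpha (hF : IsFreeIndep G F) : F.ncard ≤ freeAlpha G :=
  le_csSup (⟨Nat.card V, by rintro _ ⟨F', -, rfl⟩; exact Set.ncard_le_card F'⟩ : BddAbove _)
    ⟨F, hF, rfl⟩

lemma freeAlpha_add_dMin_le (hF : IsFreeIndep G F) : freeAlpha G + dMin G ≤ Nat.card V := by
  have hα : freeAlpha G ≤ Nat.card V - dMin G := csSup_le' <| by
    rintro _ ⟨F', hF', rfl⟩
    have := hF'.ncard_add_dMin_le
    omega
  have := hF.ncard_add_dMin_le
  omega

lemma card_le_mul_freeAlpha {t : ℕ} (h : FreePartition G t) : Nat.card V ≤ t * freeAlpha G := by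
  obtain ⟨P, hP, hcover⟩ := h
  calc Nat.card V = (⋃ i, P i).ncard := by
        rw [Set.iUnion_eq_univ_iff.2 fun v => (hcover v).exists, Set.ncard_univ]
    _ ≤ ∑ i, (P i).ncard := Set.ncard_iUnion_le_of_fintype P
    _ ≤ ∑ _i : Fin t, freeAlpha G := Finset.sum_le_sum fun i _ => ncard_le_freeAlpha (hP i)
    _ = t * freeAlpha G := by simp

end Finite

/-- `φ(G) ≥ n/ᾱ(G) ≥ n/(n - d(G))` for a free graph on `n` vertices. -/
theorem stmt4 {V : Type*} [Fintype V] (G : SimpleGraph V) (hfree : IsFreeGraph G) :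
    (∀ t : ℕ, FreePartition G t → (Fintype.card V : ℚ) / freeAlpha G ≤ t) ∧
      (Fintype.card V : ℚ) / ((Fintype.card V : ℚ) - dMin G) ≤
        (Fintype.card V : ℚ) / freeAlpha G := by
  rw [← Nat.card_eq_fintype_card]
  refine ⟨fun t ht => div_le_of_le_mul₀ (by positivity) (by positivity)
    (by exact_mod_cast card_le_mul_freeAlpha ht), ?_⟩
  rcases isEmpty_or_nonempty V with _ | ⟨⟨v⟩⟩
  · simp
  obtain ⟨F, hF, hvF⟩ := hfree v
  have hpos : 0 < freeAlpha G :=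
    ((Set.ncard_pos).2 ⟨v, hvF⟩).trans_le (ncard_le_freeAlpha hF)
  have hle : (freeAlpha G + dMin G : ℚ) ≤ Nat.card V := by
    exact_mod_cast freeAlpha_add_dMin_le hF
  exact div_le_div_of_nonneg_left (by positivity) (by exact_mod_cast hpos) (by linarith)
end

section
/- For any finite free graph G, φ(G) ≤ χ(G) + d(G), where d(G) = min over edges uv of |N(u) ∪ N(v)|. -/
open SimpleGraph

variable {V : Type*} {W : Type*}

/-
Take an edge `uv` attaining `d(G)` and let `D = N(u) ∪ N(v)`. An independent set `S` avoiding `D`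
stays independent after adding `u` or after adding `v`; maximal extensions of `S ∪ {u}` and
`S ∪ {v}` are distinct since `u ~ v`, so `S` is free. Hence the classes of an optimal colouring,
restricted to `V ∖ D`, together with the `d(G)` singletons of `D` (free because `G` is a free graph),
form a free partition with `χ(G) + d(G)` parts.
-/

section FreeChromatic

variable {V : Type*} {G : SimpleGraph V} {s t : Set V}

lemma IsIndep.mono (ht : IsIndep G t) (hst : s ⊆ t) : IsIndep G s :=
  fun _ hu _ hv => ht (hst hu) (hst hv)

lemma IsIndep.insert_of_forall_not_adj (hs : IsIndep G s) {w : V} (hw : ∀ x ∈ s, ¬G.Adj w x) :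
    IsIndep G (insert w s) := by
  rintro a (rfl | ha) b (rfl | hb) hab
  · exact G.loopless.irrefl _ hab
  · exact hw b hb hab
  · exact hw a ha hab.symm
  · exact hs ha hb hab

lemma IsIndep.exists_isMaxIndep_superset [Finite V] (hs : IsIndep G s) :
    ∃ M, IsMaxIndep G M ∧ s ⊆ M := by
  obtain ⟨M, ⟨hM, hsM⟩, hmax⟩ := Set.Finite.exists_maximalFor Set.ncard
      {t : Set V | IsIndep G t ∧ s ⊆ t} (Set.toFinite _) ⟨s, hs, subset_rfl⟩
  refine ⟨M, ⟨hM, fun t ht hMt => ?_⟩, hsM⟩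
  have hle : t.ncard ≤ M.ncard := hmax ⟨ht, hsM.trans hMt⟩ (Set.ncard_le_ncard hMt)
  exact Set.eq_of_subset_of_ncard_le hMt hle

lemma IsFreeIndep.mono (ht : IsFreeIndep G t) (hst : s ⊆ t) : IsFreeIndep G s := by
  obtain ⟨ht, M₁, M₂, h₁, h₂, hne, ht₁, ht₂⟩ := ht
  exact ⟨ht.mono hst, M₁, M₂, h₁, h₂, hne, hst.trans ht₁, hst.trans ht₂⟩

lemma IsFreeGraph.isFreeIndep_singleton (hG : IsFreeGraph G) (w : V) :
    IsFreeIndep G {w} := by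
  obtain ⟨F, hF, hw⟩ := hG w
  exact hF.mono (Set.singleton_subset_iff.2 hw)

lemma IsMaxIndep.eq_univ_of_forall_not_adj (hM : IsMaxIndep G s) (hG : ∀ u v, ¬G.Adj u v) :
    s = Set.univ :=
  hM.2 Set.univ (fun a _ b _ => hG a b) (Set.subset_univ s)

lemma IsFreeIndep.exists_adj (hs : IsFreeIndep G s) : ∃ u v, G.Adj u v := by
  by_contra! hG
  obtain ⟨-, M₁, M₂, h₁, h₂, hne, -⟩ := hs
  exact hne ((h₁.eq_univ_of_forall_not_adj hG).trans (h₂.eq_univ_of_forall_not_adj hG).symm)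

lemma IsIndep.isFreeIndep_of_disjoint [Finite V] (hs : IsIndep G s) {u v : V} (huv : G.Adj u v)
    (hD : Disjoint s (G.neighborSet u ∪ G.neighborSet v)) : IsFreeIndep G s := by
  have hsu : IsIndep G (insert u s) := hs.insert_of_forall_not_adj fun x hx hux =>
    Set.disjoint_left.1 hD hx (Or.inl hux)
  have hsv : IsIndep G (insert v s) := hs.insert_of_forall_not_adj fun x hx hvx =>
    Set.disjoint_left.1 hD hx (Or.inr hvx)
  obtain ⟨Mu, hMu, hsMu⟩ := hsu.exists_isMaxIndep_superset
  obtain ⟨Mv, hMv, hsMv⟩ := hsv.exists_isMaxIndep_superset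
  refine ⟨hs, Mu, Mv, hMu, hMv, fun h => ?_, (Set.subset_insert _ _).trans hsMu,
    (Set.subset_insert _ _).trans hsMv⟩
  exact hMu.1 (hsMu (Set.mem_insert u s)) (h ▸ hsMv (Set.mem_insert v s)) huv

lemma freeChrom_le (n : ℕ) (h : FreePartition G n) : freeChrom G ≤ n :=
  sInf_le ⟨n, rfl, h⟩

lemma freeChrom_le_natCard {ι : Type*} [Finite ι] (f : V → ι)
    (hf : ∀ i, IsFreeIndep G (f ⁻¹' {i})) : freeChrom G ≤ Nat.card ι := by
  let e := Finite.equivFin ι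
  refine freeChrom_le _ ⟨fun j => f ⁻¹' {e.symm j}, fun j => hf _, fun x => ⟨e (f x), ?_, ?_⟩⟩
  · simp
  · rintro j (hj : f x = e.symm j)
    simp [hj]

lemma colorable_chromNum [Fintype V] (G : SimpleGraph V) : G.Colorable (chromNum G) :=
  Nat.sInf_mem (s := {k | G.Colorable k}) ⟨_, G.colorable_of_fintype⟩

lemma exists_adj_ncard_eq_dMin (h : ∃ u v, G.Adj u v) :
    ∃ u v, G.Adj u v ∧ (G.neighborSet u ∪ G.neighborSet v).ncard = dMin G := by
  obtain ⟨u, v, huv⟩ := h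
  obtain ⟨u, v, huv, hd⟩ := Nat.sInf_mem (s := {k | ∃ u v, G.Adj u v ∧
    k = (G.neighborSet u ∪ G.neighborSet v).ncard}) ⟨_, u, v, huv, rfl⟩
  exact ⟨u, v, huv, hd.symm⟩

lemma freeChrom_le_add_ncard_neighborSet_union [Finite V] (hG : IsFreeGraph G) {k : ℕ}
    (hk : G.Colorable k) {u v : V} (huv : G.Adj u v) :
    freeChrom G ≤ ((k + (G.neighborSet u ∪ G.neighborSet v).ncard : ℕ) : ℕ∞) := by
  classical
  obtain ⟨c⟩ := hk
  set D := G.neighborSet u ∪ G.neighborSet v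
  let f : V → Fin k ⊕ D := fun x => if hx : x ∈ D then .inr ⟨x, hx⟩ else .inl (c x)
  have hfib : ∀ i, IsFreeIndep G (f ⁻¹' {i}) := by
    rintro (i | ⟨y, hy⟩)
    · have hsub : f ⁻¹' {.inl i} ⊆ {x | x ∉ D ∧ c x = i} := fun x hx => by
        by_cases hxD : x ∈ D <;> simp_all [f]
      refine IsIndep.isFreeIndep_of_disjoint (fun a ha b hb hab => ?_) huv
        (Set.disjoint_left.2 fun x hx => (hsub hx).1)
      exact c.valid hab ((hsub ha).2.trans (hsub hb).2.symm)
    · have hfy : f ⁻¹' {.inr ⟨y, hy⟩} = {y} := by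
        ext x
        by_cases hxD : x ∈ D <;> simp [f, hxD]
        rintro rfl
        exact hxD hy
      exact hfy ▸ hG.isFreeIndep_singleton y
  simpa [Nat.card_sum, Nat.card_coe_set_eq] using freeChrom_le_natCard f hfib

end FreeChromatic

/-- `φ(G) ≤ χ(G) + d(G)` for a finite free graph. -/
theorem stmt5 {V : Type*} [Fintype V] (G : SimpleGraph V) (hfree : IsFreeGraph G) :
    freeChrom G ≤ ((chromNum G + dMin G : ℕ) : ℕ∞) := by
  cases isEmpty_or_nonempty V with
  | inl hV =>
    calc freeChrom G ≤ Nat.card (Fin 0) := freeChrom_le_natCard (G := G) isEmptyElim finZeroElim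
      _ ≤ _ := by simp
  | inr hV =>
    obtain ⟨F, hF, -⟩ := hfree (Classical.arbitrary V)
    obtain ⟨u, v, huv, hd⟩ := exists_adj_ncard_eq_dMin hF.exists_adj
    simpa [hd] using freeChrom_le_add_ncard_neighborSet_union hfree (colorable_chromNum G) huv
end
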